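/- arXiv:1903.07216 — 2 statements merged into one kernel-verified Lean document; each statement's English description precedes it below -/
import Mathlib

section
/- With $f$ as above and the smooth function $R$ (satisfying $R'\ge 0$, $R''\ge -1/2$), the quantity $\varphi := h(R')^2(f - 2f' + f'') + hR''(f - f') + 2R'h'(f - f') + h'' f$, where $f, f', f''$ are evaluated at $t - R(r)$ and $h$ is the smooth function with $h(r)=1+e^r$ for $r\le-1$, $h(r)=2e^r$ for $r\ge1$, $h\ge1$, $h',h''>0$, is strictly positive for all $(r,t) \in \mathbb{R}^2$. In particular the sectional curvature $K_{1,2+l+\beta} = -\varphi/(fh)$ is strictly negative. -/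
open Real

theorem phi_positive (f R h : ℝ → ℝ)
    (hfsm : ContDiff ℝ (⊤ : ℕ∞) f) (hf1 : ∀ s, 1 ≤ f s)
    (hf' : ∀ s, 0 ≤ deriv f s ∧ deriv f s ≤ f s)
    (hf'' : ∀ s, deriv f s ≤ deriv (deriv f) s)
    (hf''0 : ∀ s, 0 ≤ deriv (deriv f) s)
    (hRsm : ContDiff ℝ (⊤ : ℕ∞) R) (hR1 : ∀ r ≤ (1 : ℝ), R r = r)
    (hR' : ∀ r, 0 ≤ deriv R r)
    (hR'' : ∀ r : ℝ, -(1/2) ≤ deriv (deriv R) r ∧ deriv (deriv R) r ≤ 0)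
    (hhsm : ContDiff ℝ (⊤ : ℕ∞) h) (hh1 : ∀ r, 1 ≤ h r)
    (hh' : ∀ r, 0 < deriv h r) (hh'' : ∀ r, 0 < deriv (deriv h) r)
    (hhe : ∀ r ≥ (1 : ℝ), h r = 2 * Real.exp r) :
    ∀ r t : ℝ, ∀ φ : ℝ,
      φ = h r * (deriv R r) ^ 2 *
            (f (t - R r) - 2 * deriv f (t - R r) + deriv (deriv f) (t - R r))
          + h r * deriv (deriv R) r * (f (t - R r) - deriv f (t - R r))
          + 2 * deriv R r * deriv h r * (f (t - R r) - deriv f (t - R r))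
          + deriv (deriv h) r * f (t - R r) →
      0 < φ ∧ -(φ / (f (t - R r) * h r)) < 0 := by
  intro r t φ hφ
  set s := t - R r with hs
  have ha : 1 ≤ f s := hf1 s
  have hb0 : 0 ≤ deriv f s := (hf' s).1
  have hba : deriv f s ≤ f s := (hf' s).2
  have hbc : deriv f s ≤ deriv (deriv f) s := hf'' s
  have hpos : 0 < φ := by
    rcases le_or_gt r 1 with hr | hr
    · -- on Iic 1, deriv R = 1 and deriv (deriv R) = 0
      have hR'lt : ∀ x ∈ Set.Iio (1:ℝ), deriv R x = 1 := by
        intro x hx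
        have hev : R =ᶠ[nhds x] id := by
          filter_upwards [Iio_mem_nhds hx] with y hy using hR1 y (le_of_lt hy)
        rw [hev.deriv_eq, deriv_id]
      have hRinf : ContDiff ℝ (⊤ : ℕ∞) R := hRsm.of_le (by simp)
      have hR'inf : ContDiff ℝ (⊤ : ℕ∞) (deriv R) :=
        (contDiff_infty_iff_deriv.mp hRinf).2
      have hcont : Continuous (deriv R) := hR'inf.continuous
      have hR'r : deriv R r = 1 := by
        have := Set.EqOn.closure (fun x hx => hR'lt x hx) hcont continuous_const
        have : Set.EqOn (deriv R) (fun _ => (1:ℝ)) (Set.Iic 1) := by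
          simpa [closure_Iio] using this
        exact this hr
      have hR''r : deriv (deriv R) r = 0 := by
        have hR''lt : ∀ x ∈ Set.Iio (1:ℝ), deriv (deriv R) x = 0 := by
          intro x hx
          have hev : deriv R =ᶠ[nhds x] (fun _ => (1:ℝ)) := by
            filter_upwards [Iio_mem_nhds hx] with y hy using hR'lt y hy
          rw [hev.deriv_eq, deriv_const]
        have hcont2 : Continuous (deriv (deriv R)) :=
          hR'inf.continuous_deriv (by exact_mod_cast le_top)
        have := Set.EqOn.closure (fun x hx => hR''lt x hx) hcont2 continuous_const
        have : Set.EqOn (deriv (deriv R)) (fun _ => (0:ℝ)) (Set.Iic 1) := by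
          simpa [closure_Iio] using this
        exact this hr
      have hh1r : 1 ≤ h r := hh1 r
      have hh'r : 0 < deriv h r := hh' r
      have hh''r : 0 < deriv (deriv h) r := hh'' r
      rw [hφ, hR'r, hR''r]
      nlinarith [mul_nonneg (sub_nonneg.2 hba) hh'r.le,
        mul_le_mul_of_nonneg_left ha hh''r.le]
    · -- r > 1 : h, h', h'' are all 2 e^r
      have hev : h =ᶠ[nhds r] (fun x => 2 * Real.exp x) := by
        filter_upwards [Ioi_mem_nhds hr] with y hy using hhe y (le_of_lt hy)
      have hhr : h r = 2 * Real.exp r := hhe r hr.le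
      have hh'r : deriv h r = 2 * Real.exp r := by
        rw [hev.deriv_eq]
        simp [Real.deriv_exp]
      have hh''all : ∀ x ∈ Set.Ioi (1:ℝ), deriv h x = 2 * Real.exp x := by
        intro x hx
        have hevx : h =ᶠ[nhds x] (fun y => 2 * Real.exp y) := by
          filter_upwards [Ioi_mem_nhds hx] with y hy using hhe y (le_of_lt hy)
        rw [hevx.deriv_eq]; simp [Real.deriv_exp]
      have hh''r : deriv (deriv h) r = 2 * Real.exp r := by
        have hev2 : deriv h =ᶠ[nhds r] (fun x => 2 * Real.exp x) := by
          filter_upwards [Ioi_mem_nhds hr] with y hy using hh''all y hy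
        rw [hev2.deriv_eq]; simp [Real.deriv_exp]
      have he : (0:ℝ) < Real.exp r := Real.exp_pos r
      have hR'r := hR' r
      have hR''lb := (hR'' r).1
      have hR''ub := (hR'' r).2
      rw [hφ, hhr, hh'r, hh''r]
      nlinarith [mul_nonneg (mul_nonneg (by linarith : (0:ℝ) ≤ 2 * Real.exp r) (sq_nonneg (deriv R r))) (by linarith : (0:ℝ) ≤ f s - 2 * deriv f s + deriv (deriv f) s),
        mul_nonneg (mul_nonneg hR'r he.le) (sub_nonneg.2 hba),
        mul_le_mul_of_nonneg_left (hR''lb) (by nlinarith [Real.exp_pos r] : (0:ℝ) ≤ 2 * Real.exp r * (f s - deriv f s)),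
        mul_pos he (by linarith : (0:ℝ) < f s + deriv f s)]
  refine ⟨hpos, ?_⟩
  have hfh : 0 < f s * h r :=
    mul_pos (by linarith) (by linarith [hh1 r])
  have := div_pos hpos hfh
  linarith
end

section
/- Let $f$ be smooth with $f \ge 1$, $0 \le f' \le f$, $f' \le f''$, and let $R$ be smooth with $R' \ge 0$ and $-1/2 \le R'' \le 0$. Then for all $r > 1$ and all $s$: $(R'(r))^2 (f''(s) - f'(s))^2 < \big[f(s) + (R''(r)+R'(r)^2)(f(s)-f'(s)) + R'(r)^2(f''(s)-f'(s)) + 2R'(r)(f(s)-f'(s))\big] \cdot \big[4e^{2r}(f(s)-f'(s)) + 4e^{2r}f(s) + f''(s)\big]$. -/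
open Real

theorem key_inequality_strict (f R : ℝ → ℝ)
    (hfsm : ContDiff ℝ (⊤ : ℕ∞) f) (hf1 : ∀ s, 1 ≤ f s)
    (hf' : ∀ s, 0 ≤ deriv f s ∧ deriv f s ≤ f s)
    (hf'' : ∀ s, deriv f s ≤ deriv (deriv f) s)
    (hRsm : ContDiff ℝ (⊤ : ℕ∞) R) (hR' : ∀ r, 0 ≤ deriv R r)
    (hR'' : ∀ r : ℝ, -(1/2) ≤ deriv (deriv R) r ∧ deriv (deriv R) r ≤ 0) :
    ∀ r > (1 : ℝ), ∀ s : ℝ,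
      (deriv R r) ^ 2 * (deriv (deriv f) s - deriv f s) ^ 2
        < (f s + (deriv (deriv R) r + (deriv R r) ^ 2) * (f s - deriv f s)
            + (deriv R r) ^ 2 * (deriv (deriv f) s - deriv f s)
            + 2 * deriv R r * (f s - deriv f s))
          * (4 * Real.exp (2 * r) * (f s - deriv f s)
            + 4 * Real.exp (2 * r) * f s + deriv (deriv f) s) := by
  intro r hr s
  obtain ⟨hp0, hpF⟩ := hf' s
  have hF := hf1 s
  have hq := hf'' s
  have ha := hR' r
  obtain ⟨hb1, hb2⟩ := hR'' r
  have hE : (0:ℝ) < Real.exp (2 * r) := Real.exp_pos _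
  set A := deriv R r with hA
  set B := deriv (deriv R) r with hB
  set F := f s with hFd
  set p := deriv f s with hpd
  set q := deriv (deriv f) s with hqd
  set E := Real.exp (2 * r) with hEd
  have hq0 : 0 ≤ q := le_trans hp0 hq
  have hAq : 0 ≤ A ^ 2 * (q - p) :=
    mul_nonneg (sq_nonneg A) (by linarith)
  have h1 : A ^ 2 * (q - p) ^ 2 ≤ A ^ 2 * (q - p) * q := by
    nlinarith [mul_nonneg hAq hp0]
  have h2 : F / 2 + A ^ 2 * (q - p)
      ≤ F + (B + A ^ 2) * (F - p) + A ^ 2 * (q - p) + 2 * A * (F - p) := by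
    nlinarith [mul_nonneg (by linarith : (0:ℝ) ≤ B + 1/2) (by linarith : (0:ℝ) ≤ F - p),
      mul_nonneg (sq_nonneg A) (by linarith : (0:ℝ) ≤ F - p),
      mul_nonneg ha (by linarith : (0:ℝ) ≤ F - p)]
  have h3 : 4 * E * F + q ≤ 4 * E * (F - p) + 4 * E * F + q := by
    nlinarith [mul_nonneg hE.le (by linarith : (0:ℝ) ≤ F - p)]
  have h4 : A ^ 2 * (q - p) * q < (F / 2 + A ^ 2 * (q - p)) * (4 * E * F + q) := by
    nlinarith [mul_pos hE (by linarith : (0:ℝ) < F),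
      mul_nonneg (mul_nonneg hAq hE.le) (by linarith : (0:ℝ) ≤ F),
      mul_nonneg hAq hq0]
  have h5 : (F / 2 + A ^ 2 * (q - p)) * (4 * E * F + q)
      ≤ (F + (B + A ^ 2) * (F - p) + A ^ 2 * (q - p) + 2 * A * (F - p))
        * (4 * E * (F - p) + 4 * E * F + q) := by
    apply mul_le_mul h2 h3 (by positivity) (by linarith)
  linarith
end
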